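/- arXiv:2003.11261 — 3 statements merged into one kernel-verified Lean document; each statement's English description precedes it below -/
import Mathlib

section
/- Let A be an abelian category and U ⊆ A a non-empty full subcategory closed under kernels, cokernels and finite coproducts. Then U is closed under extensions: for any short exact sequence 0 → S → E → Q → 0 in A with S, Q ∈ U, if for every epimorphism A ↠ U with U ∈ U there is a morphism V → A with V ∈ U whose composite V → A → U is epi, then E ∈ U. -/
open CategoryTheory CategoryTheory.Limits

/-!
Lift the epimorphism `X₂ ↠ X₃` to `v : V ⟶ X₂` with `V ∈ U` and `v ≫ g` epi. Then
`[f, v] : X₁ ⊞ V ⟶ X₂` is epi, and its kernel is `ker (v ≫ g)`, embedded by `(-ψ, ι)` where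
`ψ ≫ f = ι ≫ v`. So `X₂` is the cokernel of a morphism between objects of `U`.
-/

namespace CategoryTheory.ShortComplex.Exact

variable {A : Type*} [Category A] [Abelian A] {S : ShortComplex A} {V : A} (v : V ⟶ S.X₂)

lemma epi_biprod_desc_of_epi_comp (hS : S.Exact) [Epi (v ≫ S.g)] :
    Epi (biprod.desc S.f v) := by
  have : Epi S.g := epi_of_epi v S.g
  rw [Preadditive.epi_iff_cancel_zero]
  intro Z h hh
  have hf : S.f ≫ h = 0 := by simpa using biprod.inl ≫= hh
  have hv : v ≫ h = 0 := by simpa using biprod.inr ≫= hh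
  have hdesc : hS.desc h hf = 0 := by
    rw [← cancel_epi (v ≫ S.g), Category.assoc, hS.g_desc, hv, comp_zero]
  rw [← hS.g_desc h hf, hdesc, comp_zero]

variable (hS : S.Exact) [Mono S.f]

noncomputable def liftKernelComp : kernel (v ≫ S.g) ⟶ S.X₁ :=
  hS.lift (kernel.ι (v ≫ S.g) ≫ v) (by simp)

@[simp]
lemma liftKernelComp_f : hS.liftKernelComp v ≫ S.f = kernel.ι (v ≫ S.g) ≫ v :=
  hS.lift_f _ _

noncomputable def isLimitKernelForkBiprodDesc :
    IsLimit (KernelFork.ofι (f := biprod.desc S.f v)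
      (biprod.lift (-hS.liftKernelComp v) (kernel.ι (v ≫ S.g))) (by simp)) :=
  have : Mono (biprod.lift (-hS.liftKernelComp v) (kernel.ι (v ≫ S.g))) :=
    mono_of_mono_fac (biprod.lift_snd _ _)
  KernelFork.IsLimit.ofι' _ _ fun k hk =>
    have hk' : k ≫ biprod.snd ≫ v = -(k ≫ biprod.fst ≫ S.f) := by
      rw [biprod.desc_eq, Preadditive.comp_add] at hk
      exact eq_neg_of_add_eq_zero_right hk
    have hsnd : (k ≫ biprod.snd) ≫ v ≫ S.g = 0 := by simp [reassoc_of% hk']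
    ⟨kernel.lift _ (k ≫ biprod.snd) hsnd, by
      ext
      · rw [← cancel_mono S.f]
        simp [hk']
      · simp⟩

end CategoryTheory.ShortComplex.Exact

theorem stmt_1_general {A : Type*} [Category A] [Abelian A] (P : A → Prop)
    (hiso : ∀ {X Y : A}, (X ≅ Y) → P X → P Y)
    (hker : ∀ {X Y : A} (f : X ⟶ Y), P X → P Y → P (kernel f))
    (hcoker : ∀ {X Y : A} (f : X ⟶ Y), P X → P Y → P (cokernel f))
    (hcoprod : ∀ {X Y : A}, P X → P Y → P (X ⊞ Y))
    (hlift : ∀ {B U : A} (p : B ⟶ U), Epi p → P U →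
      ∃ (V : A) (v : V ⟶ B), P V ∧ Epi (v ≫ p))
    (S : ShortComplex A) (hS : S.ShortExact) (h₁ : P S.X₁) (h₃ : P S.X₃) :
    P S.X₂ := by
  have := hS.mono_f
  obtain ⟨V, v, hV, hv⟩ := hlift S.g hS.epi_g h₃
  have := hS.exact.epi_biprod_desc_of_epi_comp v
  have hX₂ : IsColimit (CokernelCofork.ofπ _ _) :=
    Abelian.epiIsCokernelOfKernel _ (hS.exact.isLimitKernelForkBiprodDesc v)
  exact hiso ((colimit.isColimit _).coconePointUniqueUpToIso hX₂)
    (hcoker _ (hker _ hV h₃) (hcoprod h₁ hV))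

/-- Let `A` be an abelian category and `U ⊆ A` (given by the predicate `P`)
a non-empty full subcategory closed under kernels, cokernels and finite (binary)
coproducts (and isomorphisms). Assume the lifting property: for every epimorphism
`A ↠ U` with `U ∈ U` there is a morphism `V → A` with `V ∈ U` whose composite with the
epimorphism is an epimorphism. Then `U` is closed under extensions: for any short exact
sequence `0 → S → E → Q → 0` with `S, Q ∈ U`, we have `E ∈ U`. -/
theorem stmt_1 {A : Type*} [Category A] [Abelian A] (P : A → Prop)
    (hne : ∃ X, P X)
    (hiso : ∀ {X Y : A}, (X ≅ Y) → P X → P Y)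
    (hker : ∀ {X Y : A} (f : X ⟶ Y), P X → P Y → P (kernel f))
    (hcoker : ∀ {X Y : A} (f : X ⟶ Y), P X → P Y → P (cokernel f))
    (hcoprod : ∀ {X Y : A}, P X → P Y → P (X ⊞ Y))
    (hlift : ∀ {B U : A} (p : B ⟶ U), Epi p → P U →
      ∃ (V : A) (v : V ⟶ B), P V ∧ Epi (v ≫ p))
    (S : ShortComplex A) (hS : S.ShortExact) (h₁ : P S.X₁) (h₃ : P S.X₃) :
    P S.X₂ :=
  stmt_1_general P hiso hker hcoker hcoprod hlift S hS h₁ h₃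
end

section
/- Let A be an abelian category with exact coproducts and let I be a complex of injective objects of A. If I is coacyclic, then I is contractible. -/
open CategoryTheory CategoryTheory.Limits CategoryTheory.Pretriangulated

variable {A : Type u} [Category.{v} A] [Abelian A]

/-- The totalization of a (short exact) sequence of complexes `K ⟶ L ⟶ M`, realized
(up to isomorphism in the homotopy category) as a shifted mapping cone of the canonical
map `Cone(f) ⟶ M`. -/
noncomputable def totSES {K L M : CochainComplex A ℤ} (f : K ⟶ L) (g : L ⟶ M)
    (hfg : f ≫ g = 0) : CochainComplex A ℤ :=
  (CochainComplex.mappingCone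
    (CochainComplex.mappingCone.desc f 0 g (by simp [hfg])))⟦(-1 : ℤ)⟧

/-- A class of objects of the homotopy category which contains the totalizations of all
degreewise short exact sequences of complexes and is thick: closed under isomorphisms,
zero objects, shifts, extensions (cones) and direct summands. -/
structure TotClosed (P : HomotopyCategory A (ComplexShape.up ℤ) → Prop) : Prop where
  tot : ∀ {K L M : CochainComplex A ℤ} (f : K ⟶ L) (g : L ⟶ M) (hfg : f ≫ g = 0),
    (ShortComplex.mk f g hfg).ShortExact →
    P ((HomotopyCategory.quotient A (ComplexShape.up ℤ)).obj (totSES f g hfg))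
  zero : ∀ (X : HomotopyCategory A (ComplexShape.up ℤ)), IsZero X → P X
  iso : ∀ {X Y : HomotopyCategory A (ComplexShape.up ℤ)}, (X ≅ Y) → P X → P Y
  shift : ∀ (X : HomotopyCategory A (ComplexShape.up ℤ)) (n : ℤ), P X → P (X⟦n⟧)
  ext₂ : ∀ (T : Triangle (HomotopyCategory A (ComplexShape.up ℤ))),
    T ∈ distinguishedTriangles → P T.obj₁ → P T.obj₃ → P T.obj₂
  smd : ∀ (X Y : HomotopyCategory A (ComplexShape.up ℤ)), P (X ⊞ Y) → P X

/-- A complex is absolutely acyclic if its image in the homotopy category belongs to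
the minimal thick subcategory containing the totalizations of short exact sequences. -/
def IsAbsolutelyAcyclic (X : HomotopyCategory A (ComplexShape.up ℤ)) : Prop :=
  ∀ P, TotClosed P → P X

/-- Closure under all existing coproducts. -/
def CoprodClosed (P : HomotopyCategory A (ComplexShape.up ℤ) → Prop) : Prop :=
  ∀ {ι : Type v} (F : ι → HomotopyCategory A (ComplexShape.up ℤ))
    (c : Cofan F), IsColimit c → (∀ i, P (F i)) → P c.pt

/-- A complex is coacyclic if its image in the homotopy category belongs to every thick
class containing the totalizations which is moreover closed under coproducts. -/
def IsCoacyclic (X : HomotopyCategory A (ComplexShape.up ℤ)) : Prop :=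
  ∀ P, TotClosed P → CoprodClosed P → P X

/-! Maps into a complex of injectives `J` kill the totalization of every degreewise short exact
sequence `0 → K → L → M → 0`: such a map amounts to cochains which, by injectivity of `J` along
the degreewise monomorphism `f` and the cokernel property of `g`, assemble into a null-homotopy.
Hence the left orthogonal in `K(A)` of the complexes of injectives is a thick subcategory
containing all totalizations; like every left orthogonal it is closed under coproducts, so it
contains every coacyclic complex. For a coacyclic complex of injectives `I`, the identity of `I`
is then zero in `K(A)`. -/

namespace CategoryTheory.ObjectProperty

variable {C D : Type*} [Category C] [Category D]

instance isStableUnderShift_map {M : Type*} [AddMonoid M] [HasShift C M] [HasShift D M]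
    (P : ObjectProperty C) [P.IsStableUnderShift M] (F : C ⥤ D) [F.CommShift M] :
    (P.map F).IsStableUnderShift M where
  isStableUnderShiftBy a := ⟨fun _ ⟨X, hX, ⟨e⟩⟩ =>
    ⟨X⟦a⟧, P.le_shift a X hX, ⟨(F.commShiftIso a).app X ≪≫ (shiftFunctor D a).mapIso e⟩⟩⟩

variable [HasZeroMorphisms C] (P : ObjectProperty C)

instance : P.leftOrthogonal.IsStableUnderRetracts where
  of_retract h hY Z f hZ := by
    rw [← h.retract_assoc f, hY (h.r ≫ f) hZ, comp_zero]

lemma leftOrthogonal_of_isColimit_cofan {ι : Type*} {X : ι → C} {c : Cofan X}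
    (hc : IsColimit c) (hX : ∀ i, P.leftOrthogonal (X i)) : P.leftOrthogonal c.pt :=
  fun _ f hY => Cofan.IsColimit.hom_ext hc _ _ fun i => by
    rw [comp_zero, hX i (c.inj i ≫ f) hY]

end CategoryTheory.ObjectProperty

namespace CochainComplex

variable (A) in
def degreewiseInjective : ObjectProperty (CochainComplex A ℤ) :=
  fun K => ∀ n, Injective (K.X n)

instance : (degreewiseInjective A).IsStableUnderShift ℤ where
  isStableUnderShiftBy a := ⟨fun _ hK n => hK (n + a)⟩

end CochainComplex

namespace CochainComplex.HomComplex.Cochain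

variable {K L M J : CochainComplex A ℤ} {n : ℤ}

lemma exists_ofHom_comp_eq_of_mono (f : K ⟶ L) [∀ p, Mono (f.f p)]
    (hJ : degreewiseInjective A J) (a : Cochain K J n) :
    ∃ q : Cochain L J n, (ofHom f).comp q (zero_add n) = a :=
  ⟨Cochain.mk fun p p' h => have := hJ p'; Injective.factorThru (a.v p p' h) (f.f p), by
    ext p p' hpp'
    have := hJ p'
    simp [Injective.comp_factorThru]⟩

lemma exists_ofHom_comp_eq_of_shortExact {f : K ⟶ L} {g : L ⟶ M} {hfg : f ≫ g = 0}
    (hS : (ShortComplex.mk f g hfg).ShortExact) (t : Cochain L J n)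
    (ht : (ofHom f).comp t (zero_add n) = 0) :
    ∃ r : Cochain M J n, (ofHom g).comp r (zero_add n) = t := by
  have hcoker (p : ℤ) := (hS.map_of_exact (HomologicalComplex.eval A _ p)).gIsCokernel
  have hft (p p' : ℤ) (h : p + n = p') : f.f p ≫ t.v p p' h = 0 := by
    simpa using congr_v ht p p' h
  refine ⟨Cochain.mk fun p p' h =>
    (CokernelCofork.IsColimit.desc' (hcoker p) (t.v p p' h) (hft p p' h)).1, ?_⟩
  ext p p' h
  simp only [zero_cochain_comp_v, ofHom_v]
  exact (CokernelCofork.IsColimit.desc' (hcoker p) (t.v p p' h) (hft p p' h)).2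

lemma ofHom_comp_injective (g : L ⟶ M) [∀ p, Epi (g.f p)] :
    Function.Injective fun r : Cochain M J n => (ofHom g).comp r (zero_add n) := by
  intro r₁ r₂ h
  ext p p' hpp'
  simpa [cancel_epi] using congr_v h p p' hpp'

end CochainComplex.HomComplex.Cochain

namespace CochainComplex.mappingCone

open HomComplex

variable {K L M J : CochainComplex A ℤ} {f : K ⟶ L} {g : L ⟶ M} {φ : mappingCone f ⟶ M}

lemma nonempty_homotopy_zero_of_cochains
    (hφ₁ : (inl f).comp (Cochain.ofHom φ) (add_zero _) = 0) (hφ₂ : inr f ≫ φ = g)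
    (u : mappingCone φ ⟶ J) (q : Cochain L J (-2)) (r : Cochain M J (-1))
    (hq : (Cochain.ofHom f).comp q (zero_add _) =
      -(inl f).comp ((inl φ).comp (Cochain.ofHom u) (add_zero _)) (by norm_num))
    (hr : (Cochain.ofHom g).comp r (zero_add _) =
      (Cochain.ofHom (inr f)).comp ((inl φ).comp (Cochain.ofHom u) (add_zero _)) (zero_add _) -
        δ (-2) (-1) q)
    (hδr : δ (-1) 0 r = Cochain.ofHom (inr φ ≫ u)) :
    Nonempty (Homotopy u 0) := by
  refine ⟨descHomotopy φ u 0 ((snd f).comp q (zero_add _)) r ?_ (by simp [hδr])⟩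
  have hsnd : δ (-2) (-1) ((snd f).comp q (zero_add _)) =
      (snd f).comp (δ (-2) (-1) q) (zero_add _) + (fst f).1.comp ((inl f).comp
        ((inl φ).comp (Cochain.ofHom u) (add_zero _)) (show (-1 : ℤ) + -1 = -2 by norm_num))
        (show (1 : ℤ) + -2 = -1 by norm_num) := by
    rw [δ_zero_cochain_comp _ _ _ (by norm_num : (-2 : ℤ) + 1 = -1), δ_snd, Cochain.neg_comp,
      Cochain.comp_assoc_of_second_is_zero_cochain, hq]
    simp [show (-2 : ℤ).negOnePow = 1 by decide]
  have hφr₁ : (inl f).comp ((Cochain.ofHom φ).comp r (zero_add _))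
      (show (-1 : ℤ) + -1 = -2 by norm_num) = 0 := by
    rw [← Cochain.comp_assoc_of_second_is_zero_cochain, hφ₁, Cochain.zero_comp]
  have hφr₂ : (Cochain.ofHom (inr f)).comp ((Cochain.ofHom φ).comp r (zero_add _)) (zero_add _) =
      (Cochain.ofHom (inr f)).comp ((inl φ).comp (Cochain.ofHom u) (add_zero _)) (zero_add _) -
        δ (-2) (-1) q := by
    rw [← Cochain.comp_assoc_of_first_is_zero_cochain, ← Cochain.ofHom_comp, hφ₂, hr]
  rw [ext_cochain_from_iff f (-2) (-1) (by norm_num), hsnd]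
  constructor
  · simp [hφr₁]
  · simp [hφr₂]

lemma nonempty_homotopy_zero_of_shortExact {hfg : f ≫ g = 0}
    (hS : (ShortComplex.mk f g hfg).ShortExact)
    (hφ₁ : (inl f).comp (Cochain.ofHom φ) (add_zero _) = 0) (hφ₂ : inr f ≫ φ = g)
    (hJ : degreewiseInjective A J) (u : mappingCone φ ⟶ J) :
    Nonempty (Homotopy u 0) := by
  have := hS.mono_f
  have := hS.epi_g
  -- `u` is encoded by `α` and `inr φ ≫ u`, and `α` by its components `a` on `K⟦1⟧` and `b` on `L`.
  set α := (inl φ).comp (Cochain.ofHom u) (add_zero _)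
  set a : Cochain K J (-2) := (inl f).comp α (by norm_num)
  set b := (Cochain.ofHom (inr f)).comp α (zero_add _)
  have hα : δ (-1) 0 α = Cochain.ofHom (φ ≫ inr φ ≫ u) := by
    rw [δ_comp_ofHom, δ_inl, ← Cochain.ofHom_comp, Category.assoc]
  have ha : δ (-2) (-1) a = -(Cochain.ofHom f).comp b (zero_add _) := by
    rw [δ_comp (inl f) α (by norm_num) 0 0 (-1) (by norm_num) (by norm_num) (by norm_num), hα,
      δ_inl, Cochain.ofHom_comp, ← Cochain.comp_assoc_of_second_is_zero_cochain, hφ₁,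
      Cochain.zero_comp, zero_add, Cochain.ofHom_comp, Cochain.comp_assoc_of_first_is_zero_cochain]
    simp [b]
  have hb : δ (-1) 0 b = Cochain.ofHom (g ≫ inr φ ≫ u) := by
    rw [δ_ofHom_comp, hα, ← Cochain.ofHom_comp, ← Category.assoc, hφ₂]
  obtain ⟨q, hq⟩ := Cochain.exists_ofHom_comp_eq_of_mono f hJ (-a)
  obtain ⟨r, hr⟩ := Cochain.exists_ofHom_comp_eq_of_shortExact hS (b - δ (-2) (-1) q) (by
    rw [Cochain.comp_sub, ← δ_ofHom_comp, hq, δ_neg, ha, neg_neg, sub_self])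
  refine nonempty_homotopy_zero_of_cochains hφ₁ hφ₂ u q r hq hr
    (Cochain.ofHom_comp_injective g ?_)
  dsimp only
  rw [← δ_ofHom_comp, hr, δ_sub, hb, δ_δ, sub_zero, ← Cochain.ofHom_comp]

end CochainComplex.mappingCone

open ObjectProperty in
lemma leftOrthogonal_quotient_obj_totSES {K L M : CochainComplex A ℤ} {f : K ⟶ L} {g : L ⟶ M}
    {hfg : f ≫ g = 0} (hS : (ShortComplex.mk f g hfg).ShortExact) :
    ((CochainComplex.degreewiseInjective A).map (HomotopyCategory.quotient A _)).leftOrthogonal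
      ((HomotopyCategory.quotient A _).obj (totSES f g hfg)) := by
  refine prop_of_iso _ (((HomotopyCategory.quotient A _).commShiftIso (-1)).app _).symm
    ((prop_shift_iff _ _ _).1 (le_shift _ (-1) _ ?_))
  rintro Y v ⟨J, hJ, ⟨e⟩⟩
  obtain ⟨w, hw⟩ := (HomotopyCategory.quotient A _).map_surjective (v ≫ e.inv)
  obtain ⟨h⟩ := CochainComplex.mappingCone.nonempty_homotopy_zero_of_shortExact hS
    (by simp) (by simp) hJ w
  rw [← cancel_mono e.inv, zero_comp, ← hw, HomotopyCategory.eq_of_homotopy _ _ h,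
    Functor.map_zero]

lemma totClosed_leftOrthogonal_degreewiseInjective :
    TotClosed ((CochainComplex.degreewiseInjective A).map
      (HomotopyCategory.quotient A _)).leftOrthogonal where
  tot _ _ _ hS := leftOrthogonal_quotient_obj_totSES hS
  zero _ hX := ObjectProperty.prop_of_isZero _ hX
  iso e hX := ObjectProperty.prop_of_iso _ e hX
  shift X n hX := ObjectProperty.le_shift _ n X hX
  ext₂ T hT h₁ h₃ := ObjectProperty.ext_of_isTriangulatedClosed₂ _ T hT h₁ h₃
  smd X Y hXY := ObjectProperty.prop_of_retract _ (BinaryBiproduct.bicone X Y).retract_left hXY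

lemma coprodClosed_leftOrthogonal (P : ObjectProperty (HomotopyCategory A (ComplexShape.up ℤ))) :
    CoprodClosed P.leftOrthogonal :=
  fun _ _ hc hF => P.leftOrthogonal_of_isColimit_cofan hc hF

theorem stmt_8_general
    (I : CochainComplex A ℤ) (hinj : ∀ n, Injective (I.X n))
    (hco : IsCoacyclic ((HomotopyCategory.quotient A (ComplexShape.up ℤ)).obj I)) :
    Nonempty (Homotopy (𝟙 I) 0) := by
  have hI := hco _ totClosed_leftOrthogonal_degreewiseInjective (coprodClosed_leftOrthogonal _)
    (𝟙 _) (ObjectProperty.prop_map_obj _ _ hinj)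
  exact ⟨HomotopyCategory.homotopyOfEq _ _ (by simpa using hI)⟩

/-- In an abelian category with exact coproducts, every coacyclic complex
of injective objects is contractible. -/
theorem stmt_8 [HasCoproducts.{v} A] [AB4.{v} A]
    (I : CochainComplex A ℤ) (hinj : ∀ n, Injective (I.X n))
    (hco : IsCoacyclic ((HomotopyCategory.quotient A (ComplexShape.up ℤ)).obj I)) :
    Nonempty (Homotopy (𝟙 I) 0) :=
  stmt_8_general I hinj hco
end

section
/- Let A be a Grothendieck abelian category, I a directed partially ordered set, and consider the functor category A^I of I-indexed diagrams. Then for every j ∈ I, the evaluation functor A^I → A at j sends injective objects of A^I to injective objects of A. -/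
/-!
Evaluation at `j` has the left adjoint `X ↦ (i ↦ ∐_{j ⟶ i} X)`. When all hom-sets are finite
(in a poset they have at most one element) and the target is additive, these coproducts are
biproducts, so this left adjoint preserves monomorphisms and its right adjoint preserves
injective objects.
-/

open CategoryTheory CategoryTheory.Limits

section

variable {C : Type*} [Category C] {D : Type*} [Category D]

lemma evaluationLeftAdjoint_map_app_eq_sigmaMap [∀ a b : C, HasCoproductsOfShape (a ⟶ b) D]
    (c : C) {d₁ d₂ : D} (f : d₁ ⟶ d₂) (t : C) :
    ((evaluationLeftAdjoint D c).map f).app t = Limits.Sigma.map fun _ => f :=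
  Sigma.map'_id _

instance evaluationLeftAdjoint_preservesMonomorphisms [Preadditive D] [HasFiniteCoproducts D]
    [∀ a b : C, Finite (a ⟶ b)] (c : C) :
    (evaluationLeftAdjoint D c).PreservesMonomorphisms where
  preserves f _ := by
    have := HasFiniteBiproducts.of_hasFiniteCoproducts (C := D)
    have (t : C) : Mono (((evaluationLeftAdjoint D c).map f).app t) := by
      rw [evaluationLeftAdjoint_map_app_eq_sigmaMap]
      exact Sigma.map_mono _
    exact NatTrans.mono_of_mono_app _

end

theorem stmt_13_general {A : Type u} [Category.{v} A] [Abelian A]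
    (I : Type u₁) [PartialOrder I] (j : I)
    (F : I ⥤ A) (hF : Injective F) :
    Injective (F.obj j) :=
  (evaluationAdjunctionRight A j).map_injective F hF

/-- Let `A` be a Grothendieck abelian category (abelian, with a generator
and exact filtered colimits) and `I` a directed partially ordered set.  Then for every
`j ∈ I`, the evaluation functor `A^I ⥤ A` at `j` sends injective objects of the diagram
category `A^I` to injective objects of `A`. -/
theorem stmt_13 {A : Type u} [Category.{v} A] [Abelian A]
    [HasFilteredColimits A] [AB5 A] (G : A) (hG : IsSeparator G)
    (I : Type u₁) [PartialOrder I] [IsDirected I (· ≤ ·)] (j : I)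
    (F : I ⥤ A) (hF : Injective F) :
    Injective (F.obj j) :=
  stmt_13_general I j F hF
end
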